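/- For every t ∈ ℝ, exp(t(S+Sᵀ)) · R · (exp(t(S+Sᵀ)))ᵀ = R; in particular, (S+Sᵀ)·R = −R·(S+Sᵀ), i.e. S+Sᵀ lies in the symplectic Lie algebra of the form R. -/

import Mathlib

/-!
The signed cyclic shift `S` anticommutes with `R`, and `R` is skew, so transposing shows that `Sᵀ`,
hence the symmetric matrix `A = S + Sᵀ`, anticommutes with `R` as well. Summing the exponential
series, `R exp(A) = exp(-A) R`, and therefore `exp(A) R exp(A)ᵀ = exp(A) exp(-A) R = R`.
-/

open Matrix

/-- The Gram matrix of the form `R(x,y) = Σ_{i=1}^n (−1)^{i−1}(x_i y_{n+i} − x_{n+i} y_i)`,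
with `0`-based indices. -/
def Rmat (n : ℕ) : Matrix (Fin (2*n)) (Fin (2*n)) ℝ := fun i j =>
  if (j : ℕ) = (i : ℕ) + n then (-1 : ℝ) ^ (i : ℕ)
  else if (i : ℕ) = (j : ℕ) + n then -(-1 : ℝ) ^ (j : ℕ)
  else 0

/-- The cyclic shift matrix `S`: `S_{i,i+1} = 1` for `1 ≤ i ≤ 2n−1` and
`S_{2n,1} = (−1)^{n−1}` (here with `0`-based indices). -/
def Smat (n : ℕ) : Matrix (Fin (2*n)) (Fin (2*n)) ℝ := fun r c =>
  if (c : ℕ) = (r : ℕ) + 1 then 1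
  else if (r : ℕ) = 2*n - 1 ∧ (c : ℕ) = 0 then (-1 : ℝ) ^ (n - 1)
  else 0

namespace Matrix

variable {m 𝔸 : Type*} [Fintype m] [DecidableEq m]

theorem semiconjBy_exp [NormedRing 𝔸] [NormedAlgebra ℚ 𝔸] [CompleteSpace 𝔸]
    {R A B : Matrix m m 𝔸} (h : SemiconjBy R A B) :
    SemiconjBy R (NormedSpace.exp A) (NormedSpace.exp B) := by
  open scoped Norms.Operator in
  -- The operator norm induces the product uniformity, but instance search does not see through
  -- `Matrix`, so completeness has to be supplied by hand.
  have : CompleteSpace (Matrix m m 𝔸) := by exact inferInstanceAs (CompleteSpace (m → m → 𝔸))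
  exact @SemiconjBy.exp_right _ _ _ this _ _ _ h

theorem exp_mul_mul_exp_transpose_eq_self [NormedCommRing 𝔸] [NormedAlgebra ℚ 𝔸]
    [CompleteSpace 𝔸] {A R : Matrix m m 𝔸} (h : R * Aᵀ = -(A * R)) :
    NormedSpace.exp A * R * (NormedSpace.exp A)ᵀ = R := by
  have hconj : R * NormedSpace.exp Aᵀ = NormedSpace.exp (-A) * R :=
    semiconjBy_exp (by rw [SemiconjBy, h, neg_mul])
  rw [← exp_transpose, mul_assoc, hconj, ← mul_assoc,
    ← exp_add_of_commute _ _ (Commute.refl A).neg_right, add_neg_cancel, NormedSpace.exp_zero,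
    one_mul]

theorem add_transpose_mul_eq_neg_mul [CommRing 𝔸] {S R : Matrix m m 𝔸} (hR : Rᵀ = -R)
    (hSR : S * R = -(R * S)) : (S + Sᵀ) * R = -(R * (S + Sᵀ)) := by
  have hStR : Sᵀ * R = -(R * Sᵀ) := by
    simpa only [transpose_neg, transpose_mul, hR, mul_neg, neg_neg, neg_mul] using
      congrArg transpose hSR.symm
  rw [add_mul, mul_add, hSR, hStR, neg_add]

end Matrix

theorem Rmat_transpose (n : ℕ) : (Rmat n)ᵀ = -Rmat n := by
  ext i j
  rw [transpose_apply, neg_apply]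
  simp only [Rmat]
  split_ifs <;> first | omega | simp_all

theorem Rmat_apply_eq_zero (n : ℕ) {i j : Fin (2 * n)} (hij : (j : ℕ) ≠ i + n)
    (hji : (i : ℕ) ≠ j + n) : Rmat n i j = 0 := by
  rw [Rmat, if_neg hij, if_neg hji]

theorem mul_Rmat_apply (n : ℕ) (M : Matrix (Fin (2 * n)) (Fin (2 * n)) ℝ) (i j : Fin (2 * n)) :
    (M * Rmat n) i j = if h : (j : ℕ) < n then M i ⟨j + n, by omega⟩ * -(-1) ^ (j : ℕ)
      else M i ⟨j - n, by omega⟩ * (-1) ^ (j - n : ℕ) := by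
  have hj := j.isLt
  rw [mul_apply]
  split_ifs with hjn
  · rw [Finset.sum_eq_single ⟨j + n, by omega⟩ (fun k _ hk => ?_) (by simp)]
    · rw [Rmat, if_neg (by simp; omega), if_pos rfl]
    · rw [Rmat_apply_eq_zero n (by omega) (fun h => hk (Fin.ext h)), mul_zero]
  · rw [Finset.sum_eq_single ⟨j - n, by omega⟩ (fun k _ hk => ?_) (by simp)]
    · rw [Rmat, if_pos (by simp; omega)]
    · rw [Rmat_apply_eq_zero n (fun h => hk (Fin.ext (by simp; omega))) (by omega), mul_zero]

theorem Smat_mul_Rmat (n : ℕ) : Smat n * Rmat n = -(Rmat n * Smat n) := by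
  ext i j
  have hRS : (Rmat n * Smat n) i j = -((Smat n)ᵀ * Rmat n) j i := by
    rw [← transpose_apply ((Smat n)ᵀ * Rmat n), transpose_mul, transpose_transpose,
      Rmat_transpose, neg_mul, neg_apply, neg_neg]
  rw [neg_apply, hRS, neg_neg, mul_Rmat_apply, mul_Rmat_apply]
  have hi := i.isLt
  have hj := j.isLt
  simp only [transpose_apply, Smat, neg_one_pow_eq_ite, Nat.even_iff]
  split_ifs <;> first | omega | norm_num

/-- For every `t`, `exp(t(S+Sᵀ))` preserves the form `R`; in particular
`(S+Sᵀ)·R = −R·(S+Sᵀ)`, i.e. `S+Sᵀ` lies in the symplectic Lie algebra of `R`. -/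
theorem stmt13 (n : ℕ) :
    (∀ t : ℝ,
      NormedSpace.exp (t • (Smat n + (Smat n)ᵀ)) * Rmat n *
        (NormedSpace.exp (t • (Smat n + (Smat n)ᵀ)))ᵀ = Rmat n) ∧
    (Smat n + (Smat n)ᵀ) * Rmat n = -(Rmat n * (Smat n + (Smat n)ᵀ)) := by
  have hanti := add_transpose_mul_eq_neg_mul (Rmat_transpose n) (Smat_mul_Rmat n)
  refine ⟨fun t => exp_mul_mul_exp_transpose_eq_self ?_, hanti⟩
  rw [transpose_smul, (isSymm_add_transpose_self (Smat n)).eq, Matrix.mul_smul, Matrix.smul_mul,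
    hanti, smul_neg, neg_neg]
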